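/- If p is a copyable blp, then p.Copied is again a blp: each of its rows is a strictly increasing sequence of natural numbers of length at least 3, the last two entries of its i-th row are i and i+1, its first two rows are (0,1,2) and (0,1,2,3), and all its step lengths satisfy the defining constraints of a blp. -/

import Mathlib

/-! ## Basic Laver patterns (raw data) -/

/-- `negGet l k` is the `k`-th entry of `l` counted from the end (1-indexed),
    i.e. `l_{-k}` in the paper's notation. -/
def negGet (l : List ℕ) (k : ℕ) : ℕ := l.getD (l.length - k) 0

/-- Raw data of a basic Laver pattern: a list of rows and a list of step lengths. -/
structure Blp where
  rows : List (List ℕ)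
  steps : List ℕ

namespace Blp

/-- The length (number of rows) of the pattern. -/
def n (p : Blp) : ℕ := p.rows.length

/-- The `i`-th row (1-indexed). -/
def rowOf (p : Blp) (i : ℕ) : List ℕ := p.rows.getD (i - 1) []

/-- The step length of row `i` (1-indexed). -/
def stepOf (p : Blp) (i : ℕ) : ℕ := p.steps.getD (i - 1) 0

def lastRow (p : Blp) : List ℕ := p.rows.getLastD []

def lastStep (p : Blp) : ℕ := p.steps.getLastD 0

/-- `p` is a basic Laver pattern (blp). -/
def IsValid (p : Blp) : Prop :=
  2 ≤ p.n ∧ p.steps.length = p.n ∧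
  p.rowOf 1 = [0, 1, 2] ∧ p.rowOf 2 = [0, 1, 2, 3] ∧
  ∀ i, 1 ≤ i → i ≤ p.n →
    List.Chain' (· < ·) (p.rowOf i) ∧
    3 ≤ (p.rowOf i).length ∧
    negGet (p.rowOf i) 2 = i ∧ negGet (p.rowOf i) 1 = i + 1 ∧
    (Odd (p.rowOf i).length → p.stepOf i = ((p.rowOf i).length - 1) / 2) ∧
    ((p.rowOf i).length = 4 → p.stepOf i = 1) ∧
    (Even (p.rowOf i).length → 4 < (p.rowOf i).length →
      p.stepOf i = (p.rowOf i).length / 2 ∨ p.stepOf i = (p.rowOf i).length / 2 - 1)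

/-- Delete the last row. -/
def del (p : Blp) : Blp := ⟨p.rows.dropLast, p.steps.dropLast⟩

end Blp

/-- The partial map `ap(s,t,ℓ)` is defined. -/
def ApDefined (s t : List ℕ) (ℓ : ℕ) : Prop :=
  0 < negGet t (ℓ + 2) ∧ ℓ + 2 ≤ t.length ∧
  (∀ x ∈ s, x ≤ negGet t (ℓ + 1)) ∧
  (∀ x ∈ s, t.headD 0 ≤ x → x < negGet t (ℓ + 2) → x ∈ t)

/-- The effect of `ap(·,t,ℓ)` on a single entry. -/
def apEntry (t : List ℕ) (ℓ x : ℕ) : ℕ :=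
  if x < t.headD 0 then x
  else if x < negGet t (ℓ + 2) then t.getD (t.idxOf x + ℓ) 0
  else negGet t 2 + x - negGet t (ℓ + 2)

/-- The sequence `ap(s,t,ℓ)` (total function; meaningful when `ApDefined s t ℓ`). -/
def apF (s t : List ℕ) (ℓ : ℕ) : List ℕ := s.map (apEntry t ℓ)

namespace Blp

/-- `a = s_{n,-ℓ_n-2}` in the definition of the copying operation. -/
def copyA (p : Blp) : ℕ := negGet p.lastRow (p.lastStep + 2)

/-- `b = s_{n,-ℓ_n-1} - 1` in the definition of the copying operation. -/
def copyB (p : Blp) : ℕ := negGet p.lastRow (p.lastStep + 1) - 1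

/-- `p` is copyable. -/
def Copyable (p : Blp) : Prop :=
  3 ≤ p.n ∧
  ∀ i ≤ p.copyB - p.copyA, ApDefined (p.rowOf (p.copyA + i)) p.lastRow p.lastStep

/-- `p.Copied` (meaningful when `p` is copyable). -/
def Copied (p : Blp) : Blp :=
  ⟨p.rows.dropLast ++
     (List.range (p.copyB - p.copyA + 1)).map
       (fun i => apF (p.rowOf (p.copyA + i)) p.lastRow p.lastStep),
   p.steps.dropLast ++
     (List.range (p.copyB - p.copyA + 1)).map (fun i => p.stepOf (p.copyA + i))⟩

/-- The zero blp is the unique blp of length 2. -/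
def IsZero (p : Blp) : Prop := p.n = 2

/-- `p` is of successor type. -/
def IsSuccType (p : Blp) : Prop := p.lastRow.take 3 = [0, 1, 2] ∧ p.lastRow.length = 5

/-- `p` is of limit type. -/
def IsLimitType (p : Blp) : Prop :=
  p.lastRow.take 3 = [0, 1, 2] ∧ p.lastRow.length = 6 ∧ p.lastStep = 3

/-- Append the auxiliary row `(a, n'+1, n'+2)` (with step length 1) to `q`. -/
def eExtend (q : Blp) (a : ℕ) : Blp :=
  ⟨q.rows ++ [[a, q.n + 1, q.n + 2]], q.steps ++ [1]⟩

/-- The operation `p.E(m)` for `p` of limit or successor type. -/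
def Eop (p : Blp) : ℕ → Blp
  | 0 => p.del
  | m + 1 => (eExtend (p.Eop m) (negGet p.lastRow 3)).Copied

end Blp

/-- Row `i + r` in the completion operation `comp(p,i,T)`:
insert `t_1, …, t_{r+1}` after position `ℓ` of `s` and replace the last entry by
`i+1, …, i+r+1`. -/
def compRow (s : List ℕ) (ℓ i r : ℕ) (T : List ℕ) : List ℕ :=
  (s.take ℓ ++ T.take (r + 1) ++ s.drop ℓ).dropLast ++
    (List.range (r + 1)).map (fun j => i + 1 + j)

namespace Blp

/-- The completion operation `comp(p,i,T)`. -/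
def comp (p : Blp) (i : ℕ) (T : List ℕ) : Blp :=
  ⟨p.rows.take (i - 1) ++
     (List.range (T.length + 1)).map (fun r => compRow (p.rowOf i) (p.stepOf i) i r T) ++
     (p.rows.drop i).map (List.map (fun x => if i < x then x + T.length else x)),
   p.steps.take (i - 1) ++
     ((List.range T.length).map (fun r => p.stepOf i + r + 1) ++ [p.stepOf i + T.length]) ++
     p.steps.drop i⟩

/-- The (descending) chain `x_1, x_2, …` with `x_{r+1} = s_{x_r,-3}`, stopping
as soon as the value is `≤ lo` (that final value is not collected). -/
def descChain (p : Blp) (lo : ℕ) : ℕ → ℕ → List ℕ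
  | 0, _ => []
  | fuel + 1, x =>
    let nx := negGet (p.rowOf x) 3
    if nx ≤ lo then [] else nx :: p.descChain lo fuel nx

/-- `fullcomp(p,i)` for a suitable row `i`. -/
def fullcomp (p : Blp) (i : ℕ) : Blp :=
  p.comp i
    ((p.descChain ((p.rowOf i).getD (p.stepOf i - 1) 0)
        ((p.rowOf i).getD (p.stepOf i) 0 + 1) ((p.rowOf i).getD (p.stepOf i) 0)).reverse)

/-- The (increasing) list of indices of suitable rows (rows of odd length `≥ 5`). -/
def suitableIdx (p : Blp) : List ℕ :=
  (List.range p.n).filterMap fun j =>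
    if 5 ≤ (p.rowOf (j + 1)).length ∧ (p.rowOf (j + 1)).length % 2 = 1 then some (j + 1)
    else none

/-- The modification operation `p.M`: apply `fullcomp` to `p.Copied` at the suitable
indices of `p`, in decreasing order. -/
def Mop (p : Blp) : Blp := p.suitableIdx.reverse.foldl (fun q i => q.fullcomp i) p.Copied

end Blp

/- The graph of the partial recursive function `f(p,m)` of the paper
(`FRel p m r` means `f(p,m)` is defined with value `r`), together with the graph
`FIter q k x r` of the `k`-fold iterate of `x ↦ f(q,x)` at `x`. -/
mutual
  inductive FRel : Blp → ℕ → ℕ → Prop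
    | zero (p : Blp) (m : ℕ) : p.IsZero → FRel p m (m * 2 ^ m)
    | notCopyable (p : Blp) (m r : ℕ) :
        ¬p.IsZero → ¬p.Copyable → FRel p.del m r → FRel p m r
    | succ (p : Blp) (m r : ℕ) :
        ¬p.IsZero → p.Copyable → p.IsSuccType → FIter p.del (2 ^ m) m r → FRel p m r
    | limit (p : Blp) (m r : ℕ) :
        ¬p.IsZero → p.Copyable → ¬p.IsSuccType → p.IsLimitType →
        FRel (p.Eop m) m r → FRel p m r
    | trans (p : Blp) (m r : ℕ) :
        ¬p.IsZero → p.Copyable → ¬p.IsSuccType → ¬p.IsLimitType →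
        FRel p.Mop m r → FRel p m r
  inductive FIter : Blp → ℕ → ℕ → ℕ → Prop
    | base (q : Blp) (x : ℕ) : FIter q 0 x x
    | step (q : Blp) (k x y r : ℕ) : FIter q k x y → FRel q y r → FIter q (k + 1) x r
end

/-! ## Ordinals below ε₀ via `ONote`, fundamental sequences, pattern sequences -/

/-- `o` denotes a successor ordinal (for `o` in normal form). -/
def isSuccO : ONote → Bool
  | .zero => false
  | .oadd e _ .zero => decide (e = ONote.zero)
  | .oadd _ _ (.oadd e' c' a') => isSuccO (.oadd e' c' a')

/-- The predecessor of a (successor) ordinal notation. -/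
def predO : ONote → ONote
  | .zero => .zero
  | .oadd e c .zero => if e = ONote.zero then ONote.ofNat ((c : ℕ) - 1) else .oadd e c .zero
  | .oadd e c (.oadd e' c' a') => .oadd e c (predO (.oadd e' c' a'))

/-- The canonical fundamental sequence: `fsO o k` is `o[k]` (meaningful for `o` in
normal form denoting a limit ordinal), obtained from the unique decomposition
`o = β + ω^γ` via `(ω^(δ+1))[k] = ω^δ·k` and `(ω^γ)[k] = ω^(γ[k])` for `γ` limit. -/
def fsO : ONote → ℕ → ONote
  | .zero, _ => .zero
  | .oadd e c (.oadd e' c' a'), k => .oadd e c (fsO (.oadd e' c' a') k)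
  | .oadd e c .zero, k =>
    let t : ONote :=
      if e = ONote.zero then .zero
      else if isSuccO e then
        (if h : k = 0 then .zero else .oadd (predO e) ⟨k, Nat.pos_of_ne_zero h⟩ .zero)
      else .oadd (fsO e k) 1 .zero
    if c = 1 then t else .oadd e (c - 1) t

/-- Auxiliary for the pattern sequence: process the Cantor normal form terms of `o`
from the left, starting from the already-computed list `L`. -/
def psFrom : List ℕ → ONote → List ℕ
  | L, .zero => L
  | L, .oadd e c a =>
    let pe := psFrom [] e
    let step : List ℕ → List ℕ := fun M =>
      if e = ONote.zero then M ++ [0]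
      else M ++ [0] ++ pe.map (· + (M.length + 1)) ++ [M.length + 1]
    psFrom (step^[(c : ℕ)] L) a

/-- The pattern sequence `ps(α)` of an ordinal `α < ε₀`. -/
def psO (o : ONote) : List ℕ := psFrom [] o

/-- The fundamental sequence for `ε₀` itself: `ε₀[0] = 1`, `ε₀[n+1] = ω^(ε₀[n])`. -/
def eps0fs : ℕ → ONote
  | 0 => 1
  | k + 1 => .oadd (eps0fs k) 1 .zero

/-- The graph of the Hardy hierarchy `H_α(n)` for `α < ε₀`:
`HardyRel o n r` means `H_{repr o}(n) = r`. -/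
inductive HardyRel : ONote → ℕ → ℕ → Prop
  | zero (n : ℕ) : HardyRel 0 n n
  | succ (o : ONote) (n r : ℕ) : HardyRel o (n + 1) r → HardyRel (o + 1) n r
  | limit (o : ONote) (n r : ℕ) :
      Order.IsSuccLimit (ONote.repr o) → HardyRel (fsO o n) (n + 1) r → HardyRel o n r

/- The graph of the `m`-hierarchy `m(α,n)` for `α < ε₀` (`MRel o n r` means
`m(repr o, n) = r`), together with the graph `MIter o k x r` of the `k`-fold
iterate of `x ↦ m(repr o, x)` at `x`. -/
mutual
  inductive MRel : ONote → ℕ → ℕ → Prop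
    | zero (n : ℕ) : MRel 0 n (n ^ n)
    | succ (o : ONote) (n r : ℕ) : MIter o n n r → MRel (o + 1) n r
    | limit (o : ONote) (n r : ℕ) :
        Order.IsSuccLimit (ONote.repr o) → MRel (fsO o n) n r → MRel o n r
  inductive MIter : ONote → ℕ → ℕ → ℕ → Prop
    | base (o : ONote) (x : ℕ) : MIter o 0 x x
    | step (o : ONote) (k x y r : ℕ) : MIter o k x y → MRel o y r → MIter o (k + 1) x r
end

/-! ## The specific patterns `q_n`, `p_α` -/

/-- The blp `q_n` with `2^n + 4` rows. -/
def qBlp (n : ℕ) : Blp :=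
  ⟨[[0, 1, 2], [0, 1, 2, 3], [0, 1, 2, 3, 4]] ++
     (List.range (2 ^ n + 1)).map (fun j => [0, 1, 2, j + 3, j + 4, j + 5]),
   [1, 1, 2] ++ List.replicate (2 ^ n + 1) 3⟩

/-- The Steinhaus–Moser functions `m_k` for finite `k`. -/
def mSMfin : ℕ → ℕ → ℕ
  | 0, n => n ^ n
  | k + 1, n => (mSMfin k)^[n] n

/-- The Steinhaus–Moser functions `m_{ω+k}`; `mSMomega 0 = m_ω` with `m_ω(n) = m_n(n)`. -/
def mSMomega : ℕ → ℕ → ℕ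
  | 0, n => mSMfin n n
  | k + 1, n => (mSMomega k)^[n] n

/-- The canonical blps `p_k` for finite `k`. -/
def pFin : ℕ → Blp
  | 0 => ⟨[[0, 1, 2], [0, 1, 2, 3]], [1, 1]⟩
  | k + 1 =>
    ⟨(pFin k).rows ++ [[0, 1, 2, (pFin k).n + 1, (pFin k).n + 2]], (pFin k).steps ++ [2]⟩

/-- The canonical blps `p_{ω+k}`. -/
def pOmegaBlp : ℕ → Blp
  | 0 => ⟨[[0, 1, 2], [0, 1, 2, 3], [0, 1, 2, 3, 4], [0, 1, 2, 3, 4, 5]], [1, 1, 2, 3]⟩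
  | k + 1 =>
    ⟨(pOmegaBlp k).rows ++ [[0, 1, 2, (pOmegaBlp k).n + 1, (pOmegaBlp k).n + 2]],
     (pOmegaBlp k).steps ++ [2]⟩

/-- The canonical blps `p_α` for `α < ω + ω`, with `Sum.inl k ↦ p_k` and
`Sum.inr k ↦ p_{ω+k}`. -/
def pSM : ℕ ⊕ ℕ → Blp
  | .inl k => pFin k
  | .inr k => pOmegaBlp k

/-- The Steinhaus–Moser functions `m_α` for `α < ω + ω`, with `Sum.inl k ↦ m_k` and
`Sum.inr k ↦ m_{ω+k}`. -/
def mSM : ℕ ⊕ ℕ → ℕ → ℕ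
  | .inl k => mSMfin k
  | .inr k => mSMomega k

/-- The canonical blp `p_α` for `α < ε₀`, built from the pattern sequence `ps(α)`. -/
def pOf (o : ONote) : Blp :=
  ⟨[[0, 1, 2], [0, 1, 2, 3]] ++
     (List.range (psO o).length).map (fun j =>
       if (psO o).getD j 0 = 0 then [0, 1, 2, j + 3, j + 4]
       else [0, 1, 2, (psO o).getD j 0 + 2, j + 3, j + 4]),
   [1, 1] ++ (psO o).map (fun t => if t = 0 then 2 else 3)⟩

/-! ## Knuth arrows and Graham's number -/

/-- Knuth's up-arrow: `knuth m a b = a ↑^m b` (with `↑^0` multiplication and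
`↑^1` exponentiation). -/
def knuth : ℕ → ℕ → ℕ → ℕ
  | 0, a, b => a * b
  | 1, a, b => a ^ b
  | _ + 2, _, 0 => 1
  | m + 2, a, b + 1 => knuth (m + 1) a (knuth (m + 2) a b)
  termination_by m _ b => (m, b)

/-- `grahamSeq k = g_{k+1}`: `g_1 = 3↑↑↑↑3`, `g_{k+1} = 3 ↑^{g_k} 3`. -/
def grahamSeq : ℕ → ℕ
  | 0 => knuth 4 3 3
  | k + 1 => knuth (grahamSeq k) 3 3

/-- Graham's number `G = g_64`. -/
def grahamNumber : ℕ := grahamSeq 63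

namespace CopiedAux

lemma getD_map_nat (f : ℕ → ℕ) (l : List ℕ) {i : ℕ} (h : i < l.length) :
    (l.map f).getD i 0 = f (l.getD i 0) := by
  rw [List.getD_eq_getElem _ _ (by simpa using h), List.getD_eq_getElem _ _ h, List.getElem_map]

lemma negGet_map (f : ℕ → ℕ) (l : List ℕ) {k : ℕ} (h1 : 0 < k) (h2 : k ≤ l.length) :
    negGet (l.map f) k = f (negGet l k) := by
  unfold negGet
  rw [List.length_map]
  exact getD_map_nat f l (by omega)

lemma length_apF (s t : List ℕ) (ℓ : ℕ) : (apF s t ℓ).length = s.length := List.length_map ..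

lemma getLastD_eq {α : Type*} (l : List α) (d : α) (h : l ≠ []) :
    l.getLastD d = l.getD (l.length - 1) d := by
  rw [List.getLastD_eq_getLast?, List.getLast?_eq_getElem?]
  have hl : 0 < l.length := List.length_pos_iff.mpr h
  rw [List.getElem?_eq_getElem (by omega), List.getD_eq_getElem _ _ (by omega)]
  rfl

lemma sorted_getD_lt {t : List ℕ} (ht : t.Pairwise (· < ·)) {i j : ℕ}
    (hij : i < j) (hj : j < t.length) : t.getD i 0 < t.getD j 0 := by
  rw [List.getD_eq_getElem _ _ (lt_trans hij hj), List.getD_eq_getElem _ _ hj]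
  exact List.pairwise_iff_get.mp ht ⟨i, lt_trans hij hj⟩ ⟨j, hj⟩ hij

lemma sorted_getD_le {t : List ℕ} (ht : t.Pairwise (· < ·)) {i j : ℕ}
    (hij : i ≤ j) (hj : j < t.length) : t.getD i 0 ≤ t.getD j 0 := by
  rcases eq_or_lt_of_le hij with rfl | h
  · exact le_refl _
  · exact le_of_lt (sorted_getD_lt ht h hj)

lemma headD_eq_getD (t : List ℕ) : t.headD 0 = t.getD 0 0 := by cases t <;> rfl

lemma indexOf_getD {t : List ℕ} {x : ℕ} (hx : x ∈ t) :
    t.getD (t.idxOf x) 0 = x := by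
  rw [List.getD_eq_getElem _ _ (List.idxOf_lt_length_iff.mpr hx)]
  exact List.getElem_idxOf _

lemma indexOf_lt_of_lt {t : List ℕ} (ht : t.Pairwise (· < ·)) {x m : ℕ}
    (hx : x ∈ t) (hlt : x < t.getD m 0) : t.idxOf x < m := by
  by_contra hc
  push_neg at hc
  have := sorted_getD_le ht hc (List.idxOf_lt_length_iff.mpr hx)
  rw [indexOf_getD hx] at this
  omega

lemma apEntry_low {t : List ℕ} {ℓ x : ℕ} (h : x < t.headD 0) : apEntry t ℓ x = x := by
  unfold apEntry; rw [if_pos h]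

lemma apEntry_mid {t : List ℕ} {ℓ x : ℕ} (h1 : t.headD 0 ≤ x) (h2 : x < negGet t (ℓ + 2)) :
    apEntry t ℓ x = t.getD (t.idxOf x + ℓ) 0 := by
  unfold apEntry; rw [if_neg (by omega), if_pos h2]

lemma head_le_negGet {t : List ℕ} (ht : t.Pairwise (· < ·)) {k : ℕ} (h1 : 0 < k)
    (h2 : k ≤ t.length) : t.headD 0 ≤ negGet t k := by
  rw [headD_eq_getD]
  exact sorted_getD_le ht (by omega) (by omega)

lemma apEntry_top {t : List ℕ} {ℓ x : ℕ} (ht : t.Pairwise (· < ·)) (hlen : ℓ + 2 ≤ t.length)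
    (hx : negGet t (ℓ + 2) ≤ x) :
    apEntry t ℓ x = negGet t 2 + x - negGet t (ℓ + 2) := by
  have hh : t.headD 0 ≤ negGet t (ℓ + 2) := head_le_negGet ht (by omega) hlen
  unfold apEntry
  rw [if_neg (by omega), if_neg (by omega)]

lemma negGet_lt_negGet {t : List ℕ} (ht : t.Pairwise (· < ·)) {j k : ℕ}
    (h1 : 0 < j) (h2 : j < k) (h3 : k ≤ t.length) : negGet t k < negGet t j := by
  unfold negGet
  exact sorted_getD_lt ht (by omega) (by omega)

lemma apEntry_lt {t : List ℕ} {ℓ x y : ℕ} (ht : t.Pairwise (· < ·))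
    (hlen : ℓ + 2 ≤ t.length)
    (hxt : t.headD 0 ≤ x → x < negGet t (ℓ + 2) → x ∈ t)
    (hyt : t.headD 0 ≤ y → y < negGet t (ℓ + 2) → y ∈ t)
    (hxy : x < y) : apEntry t ℓ x < apEntry t ℓ y := by
  have hHA : t.headD 0 ≤ negGet t (ℓ + 2) := head_le_negGet ht (by omega) hlen
  have hN2 : negGet t (ℓ + 2) ≤ negGet t 2 := by
    rcases Nat.eq_or_lt_of_le (show 2 ≤ ℓ + 2 by omega) with h | h
    · rw [← h]
    · exact le_of_lt (negGet_lt_negGet ht (by omega) h hlen)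
  have hIdx : ∀ z, z ∈ t → z < negGet t (ℓ + 2) → t.idxOf z + ℓ < t.length - 2 := by
    intro z hz h2
    have : t.idxOf z < t.length - (ℓ + 2) := indexOf_lt_of_lt ht hz h2
    omega
  rcases lt_or_ge y (t.headD 0) with hy | hy
  · rw [apEntry_low (show x < t.headD 0 by omega), apEntry_low hy]; exact hxy
  rcases lt_or_ge y (negGet t (ℓ + 2)) with hy2 | hy2
  · -- y mid
    have hymem : y ∈ t := hyt hy hy2
    have hjy := hIdx y hymem hy2
    have hyv : t.getD (t.idxOf y) 0 = y := indexOf_getD hymem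
    rw [apEntry_mid hy hy2]
    rcases lt_or_ge x (t.headD 0) with hx | hx
    · rw [apEntry_low hx]
      have h1 : t.getD 0 0 ≤ t.getD (t.idxOf y + ℓ) 0 :=
        sorted_getD_le ht (by omega) (by omega)
      rw [← headD_eq_getD] at h1
      omega
    · have hx2 : x < negGet t (ℓ + 2) := by omega
      have hxmem : x ∈ t := hxt hx hx2
      have hjx := hIdx x hxmem hx2
      have hxv : t.getD (t.idxOf x) 0 = x := indexOf_getD hxmem
      rw [apEntry_mid hx hx2]
      apply sorted_getD_lt ht _ (by omega)
      have : t.idxOf x < t.idxOf y := by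
        by_contra hc
        push_neg at hc
        have := sorted_getD_le ht hc (List.idxOf_lt_length_iff.mpr hxmem)
        omega
      omega
  · -- y top
    rw [apEntry_top ht hlen hy2]
    have hA0 : t.headD 0 ≤ negGet t 2 := head_le_negGet ht (by omega) (by omega)
    rcases lt_or_ge x (t.headD 0) with hx | hx
    · rw [apEntry_low hx]; omega
    rcases lt_or_ge x (negGet t (ℓ + 2)) with hx2 | hx2
    · have hxmem : x ∈ t := hxt hx hx2
      have hjx := hIdx x hxmem hx2
      rw [apEntry_mid hx hx2]
      have h2 : t.getD (t.idxOf x + ℓ) 0 < t.getD (t.length - 2) 0 :=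
        sorted_getD_lt ht (by omega) (by omega)
      have h3 : negGet t 2 = t.getD (t.length - 2) 0 := rfl
      omega
    · rw [apEntry_top ht hlen hx2]; omega

lemma apF_chain {s t : List ℕ} {ℓ : ℕ} (ht : List.Chain' (· < ·) t)
    (hs : List.Chain' (· < ·) s) (had : ApDefined s t ℓ) :
    List.Chain' (· < ·) (apF s t ℓ) := by
  unfold List.Chain' at *
  rw [List.isChain_iff_pairwise] at *
  unfold apF
  rw [List.pairwise_map]
  refine hs.imp_of_mem ?_
  intro a b ha hb hab
  exact apEntry_lt ht had.2.1 (fun h1 h2 => had.2.2.2 a ha h1 h2)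
    (fun h1 h2 => had.2.2.2 b hb h1 h2) hab

end CopiedAux

open CopiedAux

/-- If `p` is a copyable blp then `p.Copied` is again a blp. -/
theorem Copied_isValid :
    ∀ p : Blp, p.IsValid → p.Copyable → (p.Copied).IsValid := by
  intro p hval hcop
  obtain ⟨hn2, hsl, hr1, hr2, hrows⟩ := hval
  obtain ⟨hn3, hap⟩ := hcop
  have hnn : p.n = p.rows.length := rfl
  have hrne : p.rows ≠ [] := by
    intro h; rw [h] at hnn; simp at hnn; omega
  have hsne : p.steps ≠ [] := by
    intro h; rw [h] at hsl; simp at hsl; omega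
  have hlast : p.lastRow = p.rowOf p.n := by
    show p.rows.getLastD [] = p.rows.getD (p.n - 1) []
    rw [getLastD_eq _ _ hrne]; rfl
  have hlstep : p.lastStep = p.stepOf p.n := by
    show p.steps.getLastD 0 = p.steps.getD (p.n - 1) 0
    rw [getLastD_eq _ _ hsne, hsl]
  obtain ⟨htch, htlen3, htn2, htn1, hodd, h4, heven⟩ := hrows p.n (by omega) (le_refl _)
  have htn2' : negGet p.lastRow 2 = p.n := by rw [hlast]; exact htn2
  have htpw : p.lastRow.Pairwise (· < ·) := by
    rw [hlast]; exact List.isChain_iff_pairwise.mp htch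
  have hstep1 : 1 ≤ p.lastStep := by
    rw [hlstep]
    rcases Nat.even_or_odd (p.rowOf p.n).length with he | ho
    · rcases Nat.lt_or_ge 4 (p.rowOf p.n).length with h | h
      · rcases heven he h with h' | h' <;> omega
      · obtain ⟨k, hk⟩ := he
        have h4' : (p.rowOf p.n).length = 4 := by omega
        rw [h4 h4']
    · rw [hodd ho]; obtain ⟨k, hk⟩ := ho; omega
  have had0 := hap 0 (Nat.zero_le _)
  have hA0 : 0 < p.copyA := had0.1
  have hlen2 : p.lastStep + 2 ≤ p.lastRow.length := had0.2.1
  have hArfl : negGet p.lastRow (p.lastStep + 2) = p.copyA := rfl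
  have hAN : p.copyA < p.n := by
    have h := negGet_lt_negGet htpw (show (0:ℕ) < 2 by omega)
      (show 2 < p.lastStep + 2 by omega) hlen2
    omega
  have hBN : p.copyB < p.n := by
    have h : negGet p.lastRow (p.lastStep + 1) ≤ negGet p.lastRow 2 := by
      rcases Nat.eq_or_lt_of_le (show 2 ≤ p.lastStep + 1 by omega) with h | h
      · rw [← h]
      · exact le_of_lt (negGet_lt_negGet htpw (by omega) h (by omega))
    have hBrfl : negGet p.lastRow (p.lastStep + 1) - 1 = p.copyB := rfl
    omega
  -- structure of Copied
  have hqn : (p.Copied).n = p.n + (p.copyB - p.copyA) := by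
    show (p.rows.dropLast ++ _).length = _
    rw [List.length_append, List.length_dropLast, List.length_map, List.length_range]
    omega
  have hrowlow : ∀ i, 1 ≤ i → i ≤ p.n - 1 → (p.Copied).rowOf i = p.rowOf i := by
    intro i h1 h2
    show (p.rows.dropLast ++ _).getD (i-1) [] = p.rows.getD (i-1) []
    rw [List.getD_append _ _ _ _ (by rw [List.length_dropLast]; omega)]
    rw [List.getD_eq_getElem _ _ (by rw [List.length_dropLast]; omega),
        List.getD_eq_getElem _ _ (by omega), List.getElem_dropLast]
  have hsteplow : ∀ i, 1 ≤ i → i ≤ p.n - 1 → (p.Copied).stepOf i = p.stepOf i := by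
    intro i h1 h2
    show (p.steps.dropLast ++ _).getD (i-1) 0 = p.steps.getD (i-1) 0
    rw [List.getD_append _ _ _ _ (by rw [List.length_dropLast]; omega)]
    rw [List.getD_eq_getElem _ _ (by rw [List.length_dropLast]; omega),
        List.getD_eq_getElem _ _ (by omega), List.getElem_dropLast]
  have hrowhigh : ∀ j ≤ p.copyB - p.copyA,
      (p.Copied).rowOf (p.n + j) = apF (p.rowOf (p.copyA + j)) p.lastRow p.lastStep := by
    intro j hj
    show (p.rows.dropLast ++ _).getD (p.n + j - 1) [] = _
    rw [List.getD_append_right _ _ _ _ (by rw [List.length_dropLast]; omega)]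
    rw [List.length_dropLast]
    have he : p.n + j - 1 - (p.rows.length - 1) = j := by omega
    rw [he, List.getD_eq_getElem _ _
      (by rw [List.length_map, List.length_range]; omega),
      List.getElem_map, List.getElem_range]
  have hstephigh : ∀ j ≤ p.copyB - p.copyA,
      (p.Copied).stepOf (p.n + j) = p.stepOf (p.copyA + j) := by
    intro j hj
    show (p.steps.dropLast ++ _).getD (p.n + j - 1) 0 = _
    rw [List.getD_append_right _ _ _ _ (by rw [List.length_dropLast]; omega)]
    rw [List.length_dropLast, hsl]
    have he : p.n + j - 1 - (p.n - 1) = j := by omega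
    rw [he, List.getD_eq_getElem _ _
      (by rw [List.length_map, List.length_range]; omega),
      List.getElem_map, List.getElem_range]
  refine ⟨by omega, ?_, ?_, ?_, ?_⟩
  · show (p.steps.dropLast ++ _).length = _
    rw [List.length_append, List.length_dropLast, List.length_map, List.length_range,
        hsl, hqn]
    omega
  · rw [hrowlow 1 (le_refl _) (by omega)]; exact hr1
  · rw [hrowlow 2 (by omega) (by omega)]; exact hr2
  · intro i h1 h2
    rcases Nat.lt_or_ge i p.n with hi | hi
    · rw [hrowlow i h1 (by omega), hsteplow i h1 (by omega)]
      exact hrows i h1 (by omega)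
    · obtain ⟨j, rfl⟩ : ∃ j, i = p.n + j := ⟨i - p.n, by omega⟩
      have hj : j ≤ p.copyB - p.copyA := by omega
      have hAjn : p.copyA + j ≤ p.n := by omega
      obtain ⟨hsch, hslen, hs2, hs1, hsodd, hs4, hseven⟩ :=
        hrows (p.copyA + j) (by omega) hAjn
      have hadj := hap j hj
      rw [hrowhigh j hj, hstephigh j hj]
      have hmap : apF (p.rowOf (p.copyA + j)) p.lastRow p.lastStep =
          (p.rowOf (p.copyA + j)).map (apEntry p.lastRow p.lastStep) := rfl
      refine ⟨?_, ?_, ?_, ?_, ?_, ?_, ?_⟩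
      · exact apF_chain (by rw [hlast]; exact htch) hsch hadj
      · rw [length_apF]; exact hslen
      · rw [hmap, negGet_map _ _ (by omega) (by omega), hs2,
            apEntry_top htpw hlen2 (by omega)]
        omega
      · rw [hmap, negGet_map _ _ (by omega) (by omega), hs1,
            apEntry_top htpw hlen2 (by omega)]
        omega
      · intro ho; rw [length_apF] at ho ⊢; exact hsodd ho
      · intro h4'; rw [length_apF] at h4'; exact hs4 h4'
      · intro he hl; rw [length_apF] at he hl ⊢; exact hseven he hl
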